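/- An agent performing a clockwise cautious walk with a pebble on an oriented dynamic ring that is never blocked during 3(n-1) consecutive rounds (every edge it attempts to traverse during those rounds is present) explores n distinct nodes by the end of those rounds: an unobstructed cautious walk visits a new node every 3 rounds. Consequently, if during an interval of 9n rounds the agent explores fewer than n nodes, it is blocked during at least 6n-3 rounds of the interval. -/
import Mathlib


namespace BHS

/-- An adaptive adversary schedule for a 1-interval connected dynamic ring on `n`
nodes: footprint edge `e` joins `v_e` and `v_{e+1}`; `sched r = some e` means edge
`e` is missing in `G_r`, `sched r = none` means all edges are present (so at most
one edge is missing at each round and every `G_r` is connected). -/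
abbrev Schedule (n : ℕ) := ℕ → Option (ZMod n)

/-- One round of a clockwise cautious walk with a pebble.  The state `(b, ph)`
records the number `b` of completed exploration cycles (the current "base" node
is `start + b`) and the phase `ph` within the current three-move cycle:
* phase `0`: at the base (pebble placed there), waiting for the clockwise edge to
  move to the unexplored clockwise neighbour;
* phase `1`: at the just-explored clockwise neighbour, waiting for the
  counter-clockwise edge to go back and remove the pebble;
* phase `2`: back at the base (pebble removed), waiting for the clockwise edge to
  return to the explored node and start the next cycle (so an unobstructed walk
  visits a new node every 3 rounds).
In every phase the required edge is the footprint edge `start + b`; while it is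
absent the agent waits (is *blocked*). -/
def cwStep (n : ℕ) (start : ZMod n) (e : Option (ZMod n)) : ℕ × Fin 3 → ℕ × Fin 3
  | (b, ph) =>
      if e = some (start + (b : ZMod n)) then (b, ph)
      else if ph = 0 then (b, 1)
      else if ph = 1 then (b, 2)
      else (b + 1, 0)

/-- The state of the cautious walk started at node `start` at round `0` under
schedule `sched`. -/
def cwWalk (n : ℕ) (start : ZMod n) (sched : Schedule n) : ℕ → ℕ × Fin 3
  | 0 => (0, 0)
  | t + 1 => cwStep n start (sched t) (cwWalk n start sched t)

/-- The number of nodes explored (visited for the first time) so far by a walk in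
state `(b, ph)`: the `b + 1` nodes `start, …, start + b`, plus the node
`start + b + 1` once it has been entered (phases `1` and `2`). -/
def cwVisited (s : ℕ × Fin 3) : ℕ := s.1 + (if s.2 = 0 then 1 else 2)

/-- The walk is blocked at round `r`: the edge it needs to traverse is the
missing edge of `G_r`. -/
def Blocked (n : ℕ) (start : ZMod n) (sched : Schedule n) (r : ℕ) : Prop :=
  sched r = some (start + ((cwWalk n start sched r).1 : ZMod n))

instance (n : ℕ) (start : ZMod n) (sched : Schedule n) (r : ℕ) :
    Decidable (Blocked n start sched r) := by unfold Blocked; infer_instance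

def mfun (s : ℕ × Fin 3) : ℕ := 3 * s.1 + s.2.val

lemma mfun_step (n : ℕ) (start : ZMod n) (e : Option (ZMod n)) (s : ℕ × Fin 3) :
    mfun (cwStep n start e s) =
      if e = some (start + (s.1 : ZMod n)) then mfun s else mfun s + 1 := by
  obtain ⟨b, ph⟩ := s
  by_cases h : e = some (start + (b : ZMod n))
  · simp [cwStep, h]
  · rw [if_neg h]
    fin_cases ph <;> simp [cwStep, h, mfun] <;> omega

lemma cwVisited_eq (s : ℕ × Fin 3) : cwVisited s = (mfun s + 2) / 3 + 1 := by
  obtain ⟨b, ph⟩ := s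
  fin_cases ph <;> simp [cwVisited, mfun] <;> omega

lemma mfun_walk (n : ℕ) (start : ZMod n) (sched : Schedule n) (t0 k : ℕ) :
    mfun (cwWalk n start sched (t0 + k)) +
      ((Finset.Ico t0 (t0 + k)).filter fun r => Blocked n start sched r).card =
    mfun (cwWalk n start sched t0) + k := by
  induction k with
  | zero => simp
  | succ k ih =>
    have hins : Finset.Ico t0 (t0 + (k + 1)) = insert (t0 + k) (Finset.Ico t0 (t0 + k)) := by
      ext x
      simp only [Finset.mem_Ico, Finset.mem_insert]
      omega
    rw [hins, Finset.filter_insert]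
    have hw : cwWalk n start sched (t0 + (k + 1)) =
        cwStep n start (sched (t0 + k)) (cwWalk n start sched (t0 + k)) := rfl
    rw [hw, mfun_step]
    by_cases hb : Blocked n start sched (t0 + k) <;>
      [skip; skip] <;> first
      | (have hb' : sched (t0 + k) = some (start + ((cwWalk n start sched (t0 + k)).1 : ZMod n)) := hb
         rw [if_pos hb, if_pos hb', Finset.card_insert_of_notMem (by simp)]
         omega)
      | (have hb' : ¬ sched (t0 + k) = some (start + ((cwWalk n start sched (t0 + k)).1 : ZMod n)) := hb
         rw [if_neg hb, if_neg hb']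
         omega)

/-- An agent performing a clockwise cautious walk with a
pebble on an oriented dynamic ring that is never blocked during `3(n-1)`
consecutive rounds (every edge it attempts to traverse during those rounds is
present) explores `n` distinct nodes by the end of those rounds (an unobstructed
cautious walk visits a new node every 3 rounds).  Consequently, if during an
interval of `9n` rounds the agent explores fewer than `n` nodes, it is blocked
during at least `6n - 3` rounds of the interval. -/
theorem cautious_walk_blocking (n : ℕ) (hn : 0 < n) (start : ZMod n)
    (sched : Schedule n) :
    (∀ t0 : ℕ, (∀ r, t0 ≤ r → r < t0 + 3 * (n - 1) → ¬ Blocked n start sched r) →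
      n ≤ cwVisited (cwWalk n start sched (t0 + 3 * (n - 1)))) ∧
    (∀ t0 : ℕ,
      cwVisited (cwWalk n start sched (t0 + 9 * n))
          - cwVisited (cwWalk n start sched t0) < n →
      6 * n - 3 ≤
        ((Finset.Ico t0 (t0 + 9 * n)).filter fun r => Blocked n start sched r).card) := by
  constructor
  · intro t0 hnb
    have key := mfun_walk n start sched t0 (3 * (n - 1))
    have hz : ((Finset.Ico t0 (t0 + 3 * (n - 1))).filter
        fun r => Blocked n start sched r).card = 0 := by
      rw [Finset.card_eq_zero, Finset.filter_eq_empty_iff]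
      intro r hr
      rw [Finset.mem_Ico] at hr
      exact hnb r hr.1 hr.2
    rw [cwVisited_eq]
    omega
  · intro t0 hlt
    have key := mfun_walk n start sched t0 (9 * n)
    rw [cwVisited_eq, cwVisited_eq] at hlt
    omega

end BHS
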